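/- Let n ≥ 2, let F be a field of characteristic 0, and let f_1,…,f_{n-1} ∈ F[x_1,…,x_n]. For each i ∈ {1,…,n} let M_i denote the determinant of the (n−1)×(n−1) matrix obtained from the n×(n−1) Jacobian matrix (∂f_l/∂x_k)_{k=1,…,n; l=1,…,n-1} by deleting the i-th row. Then Σ_{i=1}^n (−1)^i ∂M_i/∂x_i = 0. (Equivalently: the vector field ad(f_1∧⋯∧f_{n-1}) = Σ_i (−1)^{n+i} M_i ∂/∂x_i has zero divergence, so inner derivations of the n-Lie algebra S^n lie in the divergence-zero Lie algebra S_n.) -/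

import Mathlib

/-!
Expand each minor `M_i` by the Leibniz formula and encode the pair `(i, σ)` as the permutation
`π` of `Fin n` with `π 0 = i` and `π (l + 1) = i.succAbove (σ l)`, whose sign is
`(-1)^i sign σ`. The sum becomes `-Σ_π sign π ∂_{π 0} ∏_l ∂_{π (l+1)} f_l`. By the product
rule this splits into terms `∂_{π 0} ∂_{π (l+1)} f_l ∏_{l' ≠ l} …`, and the term of `π`
cancels the term of `π ∘ (0 l+1)`, because partial derivatives commute while the
transposition flips the sign. Only the commutation is used, so the identity holds for any
commuting family of derivations of a commutative ring.
-/

open MvPolynomial Equiv Finset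

namespace Derivation

variable {R A M : Type*} [CommSemiring R] [CommSemiring A] [AddCommMonoid M] [Algebra R A]
  [Module A M] [Module R M]

theorem leibniz_prod (D : Derivation R A M) {ι : Type*} [DecidableEq ι] (s : Finset ι)
    (g : ι → A) : D (∏ i ∈ s, g i) = ∑ i ∈ s, (∏ j ∈ s.erase i, g j) • D (g i) := by
  induction s using Finset.induction_on with
  | empty => simp
  | insert a s ha ih =>
    rw [prod_insert ha, leibniz, ih, sum_insert ha, erase_insert ha, smul_sum, add_comm]
    congr 1
    refine sum_congr rfl fun i hi => ?_
    rw [erase_insert_of_ne (ne_of_mem_of_not_mem hi ha).symm,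
      prod_insert fun h => ha (mem_of_mem_erase h), mul_smul]

end Derivation

theorem MvPolynomial.pderiv_pderiv_comm {R σ : Type*} [CommRing R] (i j : σ)
    (p : MvPolynomial σ R) : pderiv i (pderiv j p) = pderiv j (pderiv i p) := by
  classical
  have : ⁅pderiv i, pderiv j⁆ = (0 : Derivation R (MvPolynomial σ R) (MvPolynomial σ R)) :=
    derivation_ext fun k => by
      rw [Derivation.commutator_apply]; simp only [pderiv_X, Pi.single_apply]; split_ifs <;> simp
  have := congr($this p)
  rwa [Derivation.commutator_apply, Derivation.zero_apply, sub_eq_zero] at this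

namespace Equiv.Perm

variable {m : ℕ}

def succAbove (i : Fin (m + 1)) (σ : Perm (Fin m)) : Perm (Fin (m + 1)) :=
  i.cycleRange.symm * decomposeFin.symm (0, σ)

@[simp]
theorem succAbove_apply_zero (i : Fin (m + 1)) (σ : Perm (Fin m)) : succAbove i σ 0 = i := by
  simp [succAbove, decomposeFin_symm_apply_zero, Fin.cycleRange_symm_zero]

@[simp]
theorem succAbove_apply_succ (i : Fin (m + 1)) (σ : Perm (Fin m)) (l : Fin m) :
    succAbove i σ l.succ = i.succAbove (σ l) := by
  simp [succAbove, decomposeFin_symm_apply_succ, Fin.cycleRange_symm_succ]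

theorem sign_succAbove (i : Fin (m + 1)) (σ : Perm (Fin m)) :
    sign (succAbove i σ) = (-1) ^ (i : ℕ) * sign σ := by
  simp [succAbove, decomposeFin.symm_sign, Fin.sign_cycleRange]

theorem succAbove_bijective :
    Function.Bijective fun p : Fin (m + 1) × Perm (Fin m) => succAbove p.1 p.2 := by
  refine (Fintype.bijective_iff_injective_and_card _).2
    ⟨?_, by simp [Fintype.card_perm, Nat.factorial_succ]⟩
  rintro ⟨i, σ⟩ ⟨j, τ⟩ h
  obtain rfl : i = j := by simpa using congr($h 0)
  exact Prod.ext rfl (ext fun l => by simpa using congr($h l.succ))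

end Equiv.Perm

section CommutingDerivations

variable {R A : Type*} [CommRing R] [CommRing A] [Algebra R A] {m : ℕ}
  {D : Fin (m + 1) → Derivation R A A}

theorem sum_sign_smul_derivation_prod_eq_zero (hD : ∀ i j a, D i (D j a) = D j (D i a))
    (f : Fin m → A) :
    ∑ π : Perm (Fin (m + 1)), Perm.sign π • D (π 0) (∏ l, D (π l.succ) (f l)) = 0 := by
  classical
  simp_rw [Derivation.leibniz_prod, smul_sum]
  rw [sum_comm]
  refine sum_eq_zero fun l₀ _ => ?_
  have hne : (0 : Fin (m + 1)) ≠ l₀.succ := (Fin.succ_ne_zero l₀).symm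
  refine sum_ninvolution (· * swap 0 l₀.succ) (fun π => ?_) (fun π _ => ?_)
    (fun _ => mem_univ _) (fun π => by simp [mul_assoc])
  · have hfix : ∀ l ∈ univ.erase l₀,
        D ((π * swap 0 l₀.succ) l.succ) (f l) = D (π l.succ) (f l) := fun l hl => by
        rw [Perm.mul_apply, swap_apply_of_ne_of_ne (Fin.succ_ne_zero l)
          (Fin.succ_injective _ |>.ne (ne_of_mem_erase hl))]
    rw [prod_congr rfl hfix, Perm.sign_mul, Perm.sign_swap hne]
    simp [Perm.mul_apply, hD (π 0)]
  · simpa [swap_eq_one_iff] using hne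

theorem sum_neg_one_pow_mul_derivation_det_eq_zero (hD : ∀ i j a, D i (D j a) = D j (D i a))
    (f : Fin m → A) :
    ∑ i : Fin (m + 1), (-1 : A) ^ ((i : ℕ) + 1) *
      D i (Matrix.of fun k l : Fin m => D (i.succAbove k) (f l)).det = 0 := by
  rw [← neg_eq_zero, ← sum_sign_smul_derivation_prod_eq_zero hD f,
    ← Fintype.sum_bijective _ Perm.succAbove_bijective _ _ fun _ => rfl, Fintype.sum_prod_type,
    ← sum_neg_distrib]
  refine sum_congr rfl fun i _ => ?_
  simp only [Perm.succAbove_apply_zero, Perm.succAbove_apply_succ, Perm.sign_succAbove,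
    Matrix.det_apply, Matrix.of_apply, map_sum, mul_sum, mul_smul, ← sum_neg_distrib]
  refine sum_congr rfl fun σ _ => ?_
  rw [map_zsmul_unit]
  simp [Units.smul_def, pow_succ]

end CommutingDerivations

/-- For `f_1,…,f_{n-1} ∈ F[x_1,…,x_n]`, let `M_i` be the `(n-1)×(n-1)` minor of the
`n×(n-1)` Jacobian matrix `(∂f_l/∂x_k)` obtained by deleting row `i`. Then
`Σ_{i=1}^n (−1)^i ∂M_i/∂x_i = 0`: the vector field `ad(f_1∧⋯∧f_{n-1})` has zero
divergence, so inner derivations of `S^n` lie in `S_n`. -/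
theorem inner_derivation_divergence_free
    (F : Type*) [Field F] (n : ℕ) (hn : 2 ≤ n)
    (f : Fin (n - 1) → MvPolynomial (Fin n) F) :
    ∑ i : Fin n, (-1 : MvPolynomial (Fin n) F) ^ ((i : ℕ) + 1) *
      pderiv i (Matrix.det (Matrix.of fun (k : Fin (n - 1)) (l : Fin (n - 1)) =>
        pderiv (Fin.cast (by omega : n - 1 + 1 = n)
          ((Fin.cast (by omega : n = n - 1 + 1) i).succAbove k)) (f l))) = 0 := by
  obtain ⟨m, rfl⟩ : ∃ m, n = m + 1 := ⟨n - 1, by omega⟩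
  exact sum_neg_one_pow_mul_derivation_det_eq_zero (D := pderiv) pderiv_pderiv_comm f
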